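/- If G = K_{n_1,…,n_k} is the complete multipartite graph of order n with k even and n_i = n/k for all 1 ≤ i ≤ k, then α(T_2(G)) = n²/(2k). -/

import Mathlib

/-!
If `S` is independent in `T₂(G)`, the partners of a vertex `v` (the `x` with `{v, x} ∈ S`) are
independent in `G`, because `{v, x}` and `{v, y}` are adjacent in `T₂(G)` whenever `x ~ y`. In
`K_{m,…,m}` they therefore lie in one part, and double counting gives `2|S| ≤ km · m`.
Conversely, pair the parts `2i` and `2i + 1` and take every `{u, w}` with `u, w` in the two parts
of a pair. Adjacent 2-sets have the form `{c, a}, {c, b}`, which forces `a` and `b` into the part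
paired with that of `c`; so this family of `km²/2` sets is independent.
-/

/-- The `k`-token graph of `G`: vertices are the `k`-subsets of `V(G)`, two subsets
adjacent iff their symmetric difference is an edge of `G`. -/
def tokenGraph {V : Type*} [DecidableEq V] (G : SimpleGraph V) (k : ℕ) :
    SimpleGraph {s : Finset V // s.card = k} where
  Adj A B := ∃ a b, G.Adj a b ∧ symmDiff A.1 B.1 = {a, b}
  symm := by
    refine ⟨?_⟩
    rintro A B ⟨a, b, hab, h⟩
    exact ⟨b, a, hab.symm, by rw [symmDiff_comm, h, Finset.pair_comm]⟩
  loopless := by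
    refine ⟨?_⟩
    rintro A ⟨a, b, hab, h⟩
    rw [symmDiff_self] at h
    exact (Finset.insert_ne_empty a {b}) (by simpa using h.symm)

/-- A set of vertices is independent if no two of its members are adjacent. -/
def IndepSet {W : Type*} (G : SimpleGraph W) (s : Set W) : Prop :=
  s.Pairwise fun a b => ¬ G.Adj a b

/-- The independence number of a finite graph. -/
noncomputable def indepNum {W : Type*} [Fintype W] (G : SimpleGraph W) : ℕ := by
  classical exact Finset.univ.sup fun s : Finset W => if IndepSet G ↑s then s.card else 0

/-- A graph is well-covered if all its maximal independent sets have the same cardinality. -/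
def WellCovered {W : Type*} (G : SimpleGraph W) : Prop :=
  ∀ s t : Set W, Maximal (IndepSet G) s → Maximal (IndepSet G) t → s.ncard = t.ncard

open Finset
open SimpleGraph (completeMultipartiteGraph)

section IndepNum

variable {W : Type*} [Fintype W] {G : SimpleGraph W}

lemma indepNum_le {b : ℕ} (h : ∀ s : Finset W, IndepSet G ↑s → #s ≤ b) : indepNum G ≤ b := by
  unfold indepNum
  refine Finset.sup_le fun s _ => ?_
  split_ifs with hs
  exacts [h s hs, Nat.zero_le b]

lemma card_le_indepNum {s : Finset W} (hs : IndepSet G ↑s) : #s ≤ indepNum G := by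
  unfold indepNum
  refine le_of_eq_of_le ?_ (le_sup (mem_univ s))
  rw [if_pos hs]

end IndepNum

section TokenGraphTwo

variable {V : Type*} [DecidableEq V] {G : SimpleGraph V}

lemma Finset.eq_pair_of_card_eq_two {s : Finset V} (hs : #s = 2) {a b : V} (ha : a ∈ s)
    (hb : b ∈ s) (hab : a ≠ b) : s = {a, b} :=
  (eq_of_subset_of_card_le (insert_subset ha (singleton_subset_iff.2 hb))
    (by rw [hs, card_pair hab])).symm

lemma tokenGraph_two_adj_of_adj {A B : {s : Finset V // #s = 2}} {v x y : V}
    (hA : A.1 = {v, x}) (hB : B.1 = {v, y}) (hxv : x ≠ v) (hyv : y ≠ v) (hxy : G.Adj x y) :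
    (tokenGraph G 2).Adj A B := by
  refine ⟨x, y, hxy, ?_⟩
  rw [hA, hB]
  ext z
  simp only [mem_symmDiff, mem_insert, mem_singleton]
  have := hxy.ne
  grind

lemma exists_eq_pair_of_tokenGraph_two_adj {A B : {s : Finset V // #s = 2}}
    (h : (tokenGraph G 2).Adj A B) : ∃ c a b, G.Adj a b ∧ A.1 = {c, a} ∧ B.1 = {c, b} := by
  obtain ⟨a, b, hab, hAB⟩ := h
  have hsum : #(A.1 \ B.1) + #(B.1 \ A.1) = 2 := by
    rw [← card_union_of_disjoint disjoint_sdiff_sdiff, ← sup_eq_union, ← symmDiff_def, hAB,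
      card_pair hab.ne]
  have hcomm : #(A.1 \ B.1) = #(B.1 \ A.1) := card_sdiff_comm (A.2.trans B.2.symm)
  obtain ⟨a', ha'⟩ := card_eq_one.1 (show #(A.1 \ B.1) = 1 by omega)
  obtain ⟨b', hb'⟩ := card_eq_one.1 (show #(B.1 \ A.1) = 1 by omega)
  obtain ⟨c, hc⟩ := card_eq_one.1 (show #(A.1 ∩ B.1) = 1 by
    have := card_sdiff_add_card_inter A.1 B.1; rw [A.2] at this; omega)
  have hA : A.1 = {c, a'} := by rw [← sdiff_union_inter A.1 B.1, ha', hc, union_comm, insert_eq]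
  have hB : B.1 = {c, b'} := by
    rw [← sdiff_union_inter B.1 A.1, hb', inter_comm, hc, union_comm, insert_eq]
  have hab' : G.Adj a' b' := by
    have hmem : a ∈ ({a', b'} : Finset V) ∧ b ∈ ({a', b'} : Finset V) := by
      have hpair : ({a', b'} : Finset V) = {a, b} := by
        rw [← hAB, symmDiff_def, sup_eq_union, ha', hb', insert_eq]
      simp [hpair]
    simp only [mem_insert, mem_singleton] at hmem
    rcases hmem with ⟨rfl | rfl, rfl | rfl⟩
    exacts [(hab.ne rfl).elim, hab, hab.symm, (hab.ne rfl).elim]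
  exact ⟨c, a', b', hab', hA, hB⟩

variable (S : Finset {s : Finset V // #s = 2})

def partners (v : V) : Finset V := {A ∈ S | v ∈ A.1}.biUnion (·.1.erase v)

variable {S}

lemma eq_pair_of_mem_partners {v x : V} (hx : x ∈ partners S v) :
    x ≠ v ∧ ∃ A ∈ S, A.1 = {v, x} := by
  obtain ⟨A, hA, hxA⟩ := mem_biUnion.1 hx
  obtain ⟨hAS, hvA⟩ := mem_filter.1 hA
  obtain ⟨hxv, hxA⟩ := mem_erase.1 hxA
  exact ⟨hxv, A, hAS, Finset.eq_pair_of_card_eq_two A.2 hvA hxA hxv.symm⟩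

lemma card_filter_mem_le_card_partners (v : V) : #{A ∈ S | v ∈ A.1} ≤ #(partners S v) := by
  refine card_le_card_biUnion (fun A hA B hB hAB => ?_) fun A hA => ?_
  · refine disjoint_left.2 fun x hxA hxB => hAB (Subtype.ext ?_)
    obtain ⟨hxv, hxA⟩ := mem_erase.1 hxA
    obtain ⟨-, hxB⟩ := mem_erase.1 hxB
    rw [Finset.eq_pair_of_card_eq_two A.2 (mem_filter.1 hA).2 hxA hxv.symm,
      Finset.eq_pair_of_card_eq_two B.2 (mem_filter.1 hB).2 hxB hxv.symm]
  · rw [← card_pos, card_erase_of_mem (mem_filter.1 hA).2, A.2]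
    exact Nat.one_pos

lemma indepSet_partners (hS : IndepSet (tokenGraph G 2) ↑S) (v : V) :
    IndepSet G ↑(partners S v) := by
  intro x hx y hy hxy hadj
  obtain ⟨hxv, A, hAS, hA⟩ := eq_pair_of_mem_partners hx
  obtain ⟨hyv, B, hBS, hB⟩ := eq_pair_of_mem_partners hy
  have hAB : A ≠ B := by
    rintro rfl
    have : x ∈ ({v, y} : Finset V) := hB ▸ hA ▸ mem_insert_of_mem (mem_singleton_self x)
    simp only [mem_insert, mem_singleton] at this
    tauto
  exact hS hAS hBS hAB (tokenGraph_two_adj_of_adj hA hB hxv hyv hadj)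

lemma two_mul_card_le_of_indepSet_tokenGraph_two [Fintype V] {b : ℕ}
    (hb : ∀ t : Finset V, IndepSet G ↑t → #t ≤ b) (hS : IndepSet (tokenGraph G 2) ↑S) :
    2 * #S ≤ Fintype.card V * b := by
  have hsum := sum_card_le (B := S.map (Function.Embedding.subtype _)) (n := b) fun v => by
    rw [filter_map, card_map]
    exact (card_filter_mem_le_card_partners v).trans (hb _ (indepSet_partners hS v))
  rwa [sum_map, Function.Embedding.coe_subtype, sum_congr rfl fun A _ => A.2, sum_const,
    smul_eq_mul, mul_comm] at hsum

end TokenGraphTwo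

lemma card_le_of_indepSet_completeMultipartiteGraph {ι α : Type*} [Fintype α]
    {t : Finset (Σ _ : ι, α)} (ht : IndepSet (completeMultipartiteGraph fun _ : ι => α) ↑t) :
    #t ≤ Fintype.card α := by
  refine card_le_card_of_injOn (·.2) (fun _ _ => mem_coe.2 (mem_univ _)) fun u hu w hw huw => ?_
  by_contra hne
  exact hne (Sigma.ext (not_not.1 (ht hu hw hne)) (heq_of_eq huw))

lemma indepSet_tokenGraph_two_completeMultipartiteGraph {ι : Type*} {V : ι → Type*}
    [DecidableEq (Σ i, V i)] (R : ι → ι → Prop) (hR : ∀ i j j', R i j → R i j' → j = j')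
    {S : Set {s : Finset (Σ i, V i) // #s = 2}}
    (hS : ∀ A ∈ S, ∀ u ∈ A.1, ∀ w ∈ A.1, u ≠ w → R u.1 w.1) :
    IndepSet (tokenGraph (completeMultipartiteGraph V) 2) S := by
  intro A hA B hB _ hAB
  obtain ⟨c, a, b, hab, hAc, hBc⟩ := exists_eq_pair_of_tokenGraph_two_adj hAB
  have hca : c ≠ a := by
    rintro rfl
    simpa [hAc] using A.2
  have hcb : c ≠ b := by
    rintro rfl
    simpa [hBc] using B.2
  exact hab (hR _ _ _ (hS A hA c (by simp [hAc]) a (by simp [hAc]) hca)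
    (hS B hB c (by simp [hBc]) b (by simp [hBc]) hcb))

section PairedParts

variable (c m : ℕ)

def pairedToken (p : Fin c × Fin m × Fin m) :
    {s : Finset (Σ _ : Fin (c + c), Fin m) // #s = 2} :=
  ⟨{⟨⟨2 * p.1, by have := p.1.2; omega⟩, p.2.1⟩, ⟨⟨2 * p.1 + 1, by have := p.1.2; omega⟩, p.2.2⟩},
    card_pair (by simp [Sigma.ext_iff, Fin.ext_iff])⟩

lemma pairedToken_injective : Function.Injective (pairedToken c m) := by
  rintro ⟨i, x, y⟩ ⟨i', x', y'⟩ h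
  have h := congrArg Subtype.val h
  simp only [pairedToken, Finset.ext_iff, mem_insert, mem_singleton] at h
  have hx := (h _).1 (Or.inl rfl)
  have hy := (h _).1 (Or.inr rfl)
  simp only [Sigma.mk.injEq, heq_eq_eq, Fin.ext_iff] at hx hy
  simp only [Prod.ext_iff, Fin.ext_iff]
  omega

lemma indepSet_range_pairedToken :
    IndepSet (tokenGraph (completeMultipartiteGraph fun _ : Fin (c + c) => Fin m) 2)
      (Set.range (pairedToken c m)) := by
  refine indepSet_tokenGraph_two_completeMultipartiteGraph
    (fun i j => i.1 / 2 = j.1 / 2 ∧ i ≠ j) (fun i j j' hj hj' => ?_) ?_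
  · obtain ⟨hij, hij'⟩ := hj
    obtain ⟨hij₂, hij₂'⟩ := hj'
    rw [Ne, Fin.ext_iff] at hij' hij₂'
    exact Fin.ext (by omega)
  · rintro _ ⟨⟨i, x, y⟩, rfl⟩ u hu w hw huw
    simp only [pairedToken, mem_insert, mem_singleton] at hu hw
    rcases hu with rfl | rfl <;> rcases hw with rfl | rfl
    all_goals first
      | exact absurd rfl huw
      | simp [Fin.ext_iff]; omega

end PairedParts

lemma indepNum_tokenGraph_two_completeMultipartiteGraph (c m : ℕ) :
    indepNum (tokenGraph (completeMultipartiteGraph fun _ : Fin (c + c) => Fin m) 2)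
      = c * m * m := by
  refine le_antisymm (indepNum_le fun S hS => ?_) ?_
  · have := two_mul_card_le_of_indepSet_tokenGraph_two
      (fun t ht => card_le_of_indepSet_completeMultipartiteGraph ht) hS
    simp only [Fintype.card_sigma, sum_const, card_univ, Fintype.card_fin, smul_eq_mul] at this
    linarith
  · have := card_le_indepNum (s := univ.image (pairedToken c m))
      (by simpa using indepSet_range_pairedToken c m)
    rwa [card_image_of_injective _ (pairedToken_injective c m), card_univ, Fintype.card_prod,
      Fintype.card_prod, Fintype.card_fin, Fintype.card_fin, ← mul_assoc] at this

theorem stmt8_general (k m : ℕ) (hk : Even k) :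
    2 * k * indepNum
        (tokenGraph (SimpleGraph.completeMultipartiteGraph (fun _ : Fin k => Fin m)) 2)
      = (k * m) ^ 2 := by
  obtain ⟨c, rfl⟩ := hk
  rw [indepNum_tokenGraph_two_completeMultipartiteGraph]
  ring

theorem stmt8 (k m : ℕ) (hk : Even k) (hk0 : 0 < k) (hm0 : 0 < m) :
    2 * k * indepNum
        (tokenGraph (SimpleGraph.completeMultipartiteGraph (fun _ : Fin k => Fin m)) 2)
      = (k * m) ^ 2 :=
  stmt8_general k m hk
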